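/- SM operator correctness: let 𝒜 = {a_1,…,a_n} be a finite alphabet, 𝒜* := 𝒜 ∪ {a' : a∈𝒜}, and for a W-free temporal formula φ over 𝒜 let φ* be its translation over 𝒜* and SM[φ] := φ ∧ ¬∃a_1'⋯∃a_n' ((⟨a'⟩<⟨a⟩) ∧ φ*), a QLTL formula over 𝒜, where ⟨a'⟩<⟨a⟩ := ⋀_{i=1}^n ☐(a_i'→a_i) ∧ ⋁_{i=1}^n ◇(¬a_i'∧a_i). Then a trace T over 𝒜 satisfies T,0 ⊨ SM[φ] in QLTL if and only if T is a temporal stable model of {φ}. -/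
import Mathlib


inductive Formula (A : Type) : Type
  | atom (a : A)
  | falsum
  | verum
  | conj (φ ψ : Formula A)
  | disj (φ ψ : Formula A)
  | impl (φ ψ : Formula A)
  | prev (φ : Formula A)
  | since (φ ψ : Formula A)
  | trigger (φ ψ : Formula A)
  | next (φ : Formula A)
  | untl (φ ψ : Formula A)
  | release (φ ψ : Formula A)
  | whil (φ ψ : Formula A)

/-- THT satisfaction: `satAux l T H k φ` is `⟨H,T⟩,k ⊨ φ` on traces of length `l`. -/
def satAux {A : Type} (l : ℕ∞) (T : ℕ → Set A) : (ℕ → Set A) → ℕ → Formula A → Prop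
  | H, k, .atom a => a ∈ H k
  | _, _, .falsum => False
  | _, _, .verum => True
  | H, k, .conj φ ψ => satAux l T H k φ ∧ satAux l T H k ψ
  | H, k, .disj φ ψ => satAux l T H k φ ∨ satAux l T H k ψ
  | H, k, .impl φ ψ =>
      (satAux l T H k φ → satAux l T H k ψ) ∧ (satAux l T T k φ → satAux l T T k ψ)
  | H, k, .prev φ => 0 < k ∧ satAux l T H (k - 1) φ
  | H, k, .since φ ψ =>
      ∃ j, j ≤ k ∧ satAux l T H j ψ ∧ ∀ i, j < i → i ≤ k → satAux l T H i φ
  | H, k, .trigger φ ψ =>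
      ∀ j, j ≤ k → satAux l T H j ψ ∨ ∃ i, j < i ∧ i ≤ k ∧ satAux l T H i φ
  | H, k, .next φ => ((k + 1 : ℕ) : ℕ∞) < l ∧ satAux l T H (k + 1) φ
  | H, k, .untl φ ψ =>
      ∃ j, k ≤ j ∧ (j : ℕ∞) < l ∧ satAux l T H j ψ ∧ ∀ i, k ≤ i → i < j → satAux l T H i φ
  | H, k, .release φ ψ =>
      ∀ j, k ≤ j → (j : ℕ∞) < l → satAux l T H j ψ ∨ ∃ i, k ≤ i ∧ i < j ∧ satAux l T H i φ
  | H, k, .whil φ ψ =>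
      (∀ j, k ≤ j → (j : ℕ∞) < l →
          satAux l T H j φ ∨ ∃ i, k ≤ i ∧ i < j ∧ ¬ satAux l T H i ψ)
        ∧
      (∀ j, k ≤ j → (j : ℕ∞) < l →
          satAux l T T j φ ∨ ∃ i, k ≤ i ∧ i < j ∧ ¬ satAux l T T i ψ)

/-- `Sat l H T k φ` : the HT-trace `⟨H,T⟩` of length `l` satisfies `φ` at time `k`. -/
def Sat {A : Type} (l : ℕ∞) (H T : ℕ → Set A) (k : ℕ) (φ : Formula A) : Prop :=
  satAux l T H k φ

/-- `⟨H,T⟩` is an HT-trace of length `l`. -/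
def IsHT {A : Type} (l : ℕ∞) (H T : ℕ → Set A) : Prop :=
  ∀ i : ℕ, (i : ℕ∞) < l → H i ⊆ T i

def TraceLe {A : Type} (l : ℕ∞) (H T : ℕ → Set A) : Prop :=
  ∀ i : ℕ, (i : ℕ∞) < l → H i ⊆ T i

def TraceEq {A : Type} (l : ℕ∞) (H T : ℕ → Set A) : Prop :=
  ∀ i : ℕ, (i : ℕ∞) < l → H i = T i

def TraceLt {A : Type} (l : ℕ∞) (H T : ℕ → Set A) : Prop :=
  TraceLe l H T ∧ ¬ TraceEq l H T

def Formula.neg {A : Type} (φ : Formula A) : Formula A := .impl φ .falsum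
def Formula.always {A : Type} (φ : Formula A) : Formula A := .release .falsum φ
def Formula.ev {A : Type} (φ : Formula A) : Formula A := .untl .verum φ
def Formula.final {A : Type} : Formula A := Formula.neg (.next .verum)
def Formula.wnext {A : Type} (φ : Formula A) : Formula A := .disj (.next φ) .final
def Formula.initial {A : Type} : Formula A := Formula.neg (.prev .verum)
def Formula.wprev {A : Type} (φ : Formula A) : Formula A := .disj (.prev φ) .initial
def Formula.evP {A : Type} (φ : Formula A) : Formula A := .since .verum φ
def Formula.alwP {A : Type} (φ : Formula A) : Formula A := .trigger .falsum φ

/-- THT-equivalence of two formulas. -/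
def ThtEquiv {A : Type} (φ ψ : Formula A) : Prop :=
  ∀ (l : ℕ∞) (H T : ℕ → Set A), IsHT l H T →
    ∀ k : ℕ, (k : ℕ∞) < l → (Sat l H T k φ ↔ Sat l H T k ψ)

/-- `⟨H,T⟩` is a model of the theory `Γ`. -/
def IsModel {A : Type} (l : ℕ∞) (H T : ℕ → Set A) (Γ : Set (Formula A)) : Prop :=
  (0 : ℕ∞) < l ∧ ∀ φ ∈ Γ, Sat l H T 0 φ

/-- `T` (of length `l`) is a temporal stable model of `Γ`. -/
def IsTS {A : Type} (l : ℕ∞) (T : ℕ → Set A) (Γ : Set (Formula A)) : Prop :=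
  IsModel l T T Γ ∧ ∀ H : ℕ → Set A, TraceLt l H T → ¬ IsModel l H T Γ

/-- W-free temporal formulas. -/
def WFree {A : Type} : Formula A → Prop
  | .atom _ => True
  | .falsum => True
  | .verum => True
  | .conj φ ψ => WFree φ ∧ WFree ψ
  | .disj φ ψ => WFree φ ∧ WFree ψ
  | .impl φ ψ => WFree φ ∧ WFree ψ
  | .prev φ => WFree φ
  | .since φ ψ => WFree φ ∧ WFree ψ
  | .trigger φ ψ => WFree φ ∧ WFree ψ
  | .next φ => WFree φ
  | .untl φ ψ => WFree φ ∧ WFree ψ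
  | .release φ ψ => WFree φ ∧ WFree ψ
  | .whil _ _ => False

/-- Embedding of a formula over `𝒜` into the extended alphabet `𝒜* = 𝒜 ⊕ 𝒜`
(`Sum.inl a` is the atom `a`, `Sum.inr a` is its primed copy `a'`). -/
def unprimed {A : Type} : Formula A → Formula (A ⊕ A)
  | .atom a => .atom (.inl a)
  | .falsum => .falsum
  | .verum => .verum
  | .conj φ ψ => .conj (unprimed φ) (unprimed ψ)
  | .disj φ ψ => .disj (unprimed φ) (unprimed ψ)
  | .impl φ ψ => .impl (unprimed φ) (unprimed ψ)
  | .prev φ => .prev (unprimed φ)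
  | .since φ ψ => .since (unprimed φ) (unprimed ψ)
  | .trigger φ ψ => .trigger (unprimed φ) (unprimed ψ)
  | .next φ => .next (unprimed φ)
  | .untl φ ψ => .untl (unprimed φ) (unprimed ψ)
  | .release φ ψ => .release (unprimed φ) (unprimed ψ)
  | .whil φ ψ => .whil (unprimed φ) (unprimed ψ)

/-- The translation `φ*` over the extended alphabet. -/
def star {A : Type} : Formula A → Formula (A ⊕ A)
  | .atom a => .atom (.inr a)
  | .falsum => .falsum
  | .verum => .verum
  | .conj φ ψ => .conj (star φ) (star ψ)
  | .disj φ ψ => .disj (star φ) (star ψ)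
  | .impl φ ψ => .conj (.impl (unprimed φ) (unprimed ψ)) (.impl (star φ) (star ψ))
  | .prev φ => .prev (star φ)
  | .since φ ψ => .since (star φ) (star ψ)
  | .trigger φ ψ => .trigger (star φ) (star ψ)
  | .next φ => .next (star φ)
  | .untl φ ψ => .untl (star φ) (star ψ)
  | .release φ ψ => .release (star φ) (star ψ)
  | .whil φ ψ => .whil (star φ) (star ψ)

/-- Finite conjunction of a list of formulas. -/
def bigAnd {B : Type} (L : List (Formula B)) : Formula B := L.foldr .conj .verum

/-- Finite disjunction of a list of formulas. -/
def bigOr {B : Type} (L : List (Formula B)) : Formula B := L.foldr .disj .falsum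

/-- The formula `⟨a'⟩ < ⟨a⟩ := ⋀_{a∈𝒜} ☐(a'→a) ∧ ⋁_{a∈𝒜} ◇(¬a' ∧ a)`. -/
noncomputable def ltFormula (A : Type) [Fintype A] : Formula (A ⊕ A) :=
  .conj
    (bigAnd ((Finset.univ : Finset A).toList.map fun a =>
      Formula.always (.impl (.atom (.inr a)) (.atom (.inl a)))))
    (bigOr ((Finset.univ : Finset A).toList.map fun a =>
      Formula.ev (.conj (Formula.neg (.atom (.inr a))) (.atom (.inl a)))))

/-- QLTL formulas: temporal formulas extended with quantifiers over atoms. -/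
inductive QFormula (B : Type) : Type
  | atom (b : B)
  | falsum
  | verum
  | conj (φ ψ : QFormula B)
  | disj (φ ψ : QFormula B)
  | impl (φ ψ : QFormula B)
  | prev (φ : QFormula B)
  | since (φ ψ : QFormula B)
  | trigger (φ ψ : QFormula B)
  | next (φ : QFormula B)
  | untl (φ ψ : QFormula B)
  | release (φ ψ : QFormula B)
  | whil (φ ψ : QFormula B)
  | qex (b : B) (φ : QFormula B)
  | qall (b : B) (φ : QFormula B)

/-- QLTL satisfaction on traces of length `l` (extending classical LTL satisfaction;
quantifiers range over `{b}`-variant traces). -/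
def QSat {B : Type} (l : ℕ∞) : (ℕ → Set B) → ℕ → QFormula B → Prop
  | T, k, .atom b => b ∈ T k
  | _, _, .falsum => False
  | _, _, .verum => True
  | T, k, .conj φ ψ => QSat l T k φ ∧ QSat l T k ψ
  | T, k, .disj φ ψ => QSat l T k φ ∨ QSat l T k ψ
  | T, k, .impl φ ψ => QSat l T k φ → QSat l T k ψ
  | T, k, .prev φ => 0 < k ∧ QSat l T (k - 1) φ
  | T, k, .since φ ψ =>
      ∃ j, j ≤ k ∧ QSat l T j ψ ∧ ∀ i, j < i → i ≤ k → QSat l T i φ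
  | T, k, .trigger φ ψ =>
      ∀ j, j ≤ k → QSat l T j ψ ∨ ∃ i, j < i ∧ i ≤ k ∧ QSat l T i φ
  | T, k, .next φ => ((k + 1 : ℕ) : ℕ∞) < l ∧ QSat l T (k + 1) φ
  | T, k, .untl φ ψ =>
      ∃ j, k ≤ j ∧ (j : ℕ∞) < l ∧ QSat l T j ψ ∧ ∀ i, k ≤ i → i < j → QSat l T i φ
  | T, k, .release φ ψ =>
      ∀ j, k ≤ j → (j : ℕ∞) < l → QSat l T j ψ ∨ ∃ i, k ≤ i ∧ i < j ∧ QSat l T i φ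
  | T, k, .whil φ ψ =>
      ∀ j, k ≤ j → (j : ℕ∞) < l → QSat l T j φ ∨ ∃ i, k ≤ i ∧ i < j ∧ ¬ QSat l T i ψ
  | T, k, .qex b φ =>
      ∃ T' : ℕ → Set B, (∀ i : ℕ, (i : ℕ∞) < l → T' i \ {b} = T i \ {b}) ∧ QSat l T' k φ
  | T, k, .qall b φ =>
      ∀ T' : ℕ → Set B, (∀ i : ℕ, (i : ℕ∞) < l → T' i \ {b} = T i \ {b}) → QSat l T' k φ

/-- Embedding of temporal formulas into QLTL formulas. -/
def toQ {B : Type} : Formula B → QFormula B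
  | .atom b => .atom b
  | .falsum => .falsum
  | .verum => .verum
  | .conj φ ψ => .conj (toQ φ) (toQ ψ)
  | .disj φ ψ => .disj (toQ φ) (toQ ψ)
  | .impl φ ψ => .impl (toQ φ) (toQ ψ)
  | .prev φ => .prev (toQ φ)
  | .since φ ψ => .since (toQ φ) (toQ ψ)
  | .trigger φ ψ => .trigger (toQ φ) (toQ ψ)
  | .next φ => .next (toQ φ)
  | .untl φ ψ => .untl (toQ φ) (toQ ψ)
  | .release φ ψ => .release (toQ φ) (toQ ψ)
  | .whil φ ψ => .whil (toQ φ) (toQ ψ)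

/-- Existential quantification over a list of atoms. -/
def exList {B : Type} (L : List B) (φ : QFormula B) : QFormula B := L.foldr .qex φ

/-- The QLTL formula `SM[φ] := φ ∧ ¬∃a₁'⋯∃aₙ' ((⟨a'⟩<⟨a⟩) ∧ φ*)` over the
extended alphabet, whose free atoms are the unprimed ones. -/
noncomputable def SMf {A : Type} [Fintype A] (φ : Formula A) : QFormula (A ⊕ A) :=
  .conj (toQ (unprimed φ))
    (.impl
      (exList ((Finset.univ : Finset A).toList.map Sum.inr)
        (.conj (toQ (ltFormula A)) (toQ (star φ))))
      .falsum)

section Lemmas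
variable {A B : Type} {l : ℕ∞}

def patch (l : ℕ∞) (U V : ℕ → Set B) : ℕ → Set B :=
  fun i => if (i : ℕ∞) < l then U i else V i

lemma toQ_sat (U : ℕ → Set B) (ψ : Formula B) (k : ℕ) :
    QSat l U k (toQ ψ) ↔ satAux l U U k ψ := by
  induction ψ generalizing k with
  | atom a => simp [toQ, QSat, satAux]
  | falsum => simp [toQ, QSat, satAux]
  | verum => simp [toQ, QSat, satAux]
  | conj φ ψ ih1 ih2 => simp [toQ, QSat, satAux, ih1, ih2]
  | disj φ ψ ih1 ih2 => simp [toQ, QSat, satAux, ih1, ih2]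
  | impl φ ψ ih1 ih2 =>
      simp only [toQ, QSat, satAux, ih1, ih2]; tauto
  | prev φ ih => simp [toQ, QSat, satAux, ih]
  | since φ ψ ih1 ih2 => simp [toQ, QSat, satAux, ih1, ih2]
  | trigger φ ψ ih1 ih2 => simp [toQ, QSat, satAux, ih1, ih2]
  | next φ ih => simp [toQ, QSat, satAux, ih]
  | untl φ ψ ih1 ih2 => simp [toQ, QSat, satAux, ih1, ih2]
  | release φ ψ ih1 ih2 => simp [toQ, QSat, satAux, ih1, ih2]
  | whil φ ψ ih1 ih2 =>
      simp only [toQ, QSat, satAux, ih1, ih2]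
      exact ⟨fun h => ⟨h, h⟩, fun h => h.1⟩

lemma qsat_congr {U V : ℕ → Set B} (h : ∀ i : ℕ, (i : ℕ∞) < l → U i = V i)
    {k : ℕ} (hk : (k : ℕ∞) < l) (ψ : QFormula B) :
    QSat l U k ψ ↔ QSat l V k ψ := by
  induction ψ generalizing U V k with
  | atom a => simp [QSat, h k hk]
  | falsum => simp [QSat]
  | verum => simp [QSat]
  | conj φ ψ ih1 ih2 => simp [QSat, ih1 h hk, ih2 h hk]
  | disj φ ψ ih1 ih2 => simp [QSat, ih1 h hk, ih2 h hk]
  | impl φ ψ ih1 ih2 => simp [QSat, ih1 h hk, ih2 h hk]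
  | prev φ ih =>
      simp only [QSat]
      constructor <;> rintro ⟨hp, hs⟩ <;> refine ⟨hp, ?_⟩
      · exact (ih h (lt_of_le_of_lt (Nat.cast_le.mpr (Nat.sub_le k 1)) hk)).mp hs
      · exact (ih h (lt_of_le_of_lt (Nat.cast_le.mpr (Nat.sub_le k 1)) hk)).mpr hs
  | since φ ψ ih1 ih2 =>
      simp only [QSat]
      constructor <;> rintro ⟨j, hj, hψ, hφ⟩ <;>
        refine ⟨j, hj, ?_, fun i h1 h2 => ?_⟩
      · exact (ih2 h (lt_of_le_of_lt (Nat.cast_le.mpr hj) hk)).mp hψ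
      · exact (ih1 h (lt_of_le_of_lt (Nat.cast_le.mpr h2) hk)).mp (hφ i h1 h2)
      · exact (ih2 h (lt_of_le_of_lt (Nat.cast_le.mpr hj) hk)).mpr hψ
      · exact (ih1 h (lt_of_le_of_lt (Nat.cast_le.mpr h2) hk)).mpr (hφ i h1 h2)
  | trigger φ ψ ih1 ih2 =>
      simp only [QSat]
      constructor <;> intro hyp j hj <;> rcases hyp j hj with h1 | ⟨i, hi1, hi2, hi3⟩
      · exact Or.inl ((ih2 h (lt_of_le_of_lt (Nat.cast_le.mpr hj) hk)).mp h1)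
      · exact Or.inr ⟨i, hi1, hi2, (ih1 h (lt_of_le_of_lt (Nat.cast_le.mpr hi2) hk)).mp hi3⟩
      · exact Or.inl ((ih2 h (lt_of_le_of_lt (Nat.cast_le.mpr hj) hk)).mpr h1)
      · exact Or.inr ⟨i, hi1, hi2, (ih1 h (lt_of_le_of_lt (Nat.cast_le.mpr hi2) hk)).mpr hi3⟩
  | next φ ih =>
      simp only [QSat]
      constructor <;> rintro ⟨hp, hs⟩
      · exact ⟨hp, (ih h hp).mp hs⟩
      · exact ⟨hp, (ih h hp).mpr hs⟩
  | untl φ ψ ih1 ih2 =>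
      simp only [QSat]
      constructor <;> rintro ⟨j, hj, hjl, hψ, hφ⟩ <;>
        refine ⟨j, hj, hjl, ?_, fun i h1 h2 => ?_⟩
      · exact (ih2 h hjl).mp hψ
      · exact (ih1 h (lt_trans (Nat.cast_lt.mpr h2) hjl)).mp (hφ i h1 h2)
      · exact (ih2 h hjl).mpr hψ
      · exact (ih1 h (lt_trans (Nat.cast_lt.mpr h2) hjl)).mpr (hφ i h1 h2)
  | release φ ψ ih1 ih2 =>
      simp only [QSat]
      constructor <;> intro hyp j hj hjl <;> rcases hyp j hj hjl with h1 | ⟨i, hi1, hi2, hi3⟩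
      · exact Or.inl ((ih2 h hjl).mp h1)
      · exact Or.inr ⟨i, hi1, hi2, (ih1 h (lt_trans (Nat.cast_lt.mpr hi2) hjl)).mp hi3⟩
      · exact Or.inl ((ih2 h hjl).mpr h1)
      · exact Or.inr ⟨i, hi1, hi2, (ih1 h (lt_trans (Nat.cast_lt.mpr hi2) hjl)).mpr hi3⟩
  | whil φ ψ ih1 ih2 =>
      simp only [QSat]
      constructor <;> intro hyp j hj hjl <;> rcases hyp j hj hjl with h1 | ⟨i, hi1, hi2, hi3⟩
      · exact Or.inl ((ih1 h hjl).mp h1)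
      · exact Or.inr ⟨i, hi1, hi2, fun c => hi3 ((ih2 h (lt_trans (Nat.cast_lt.mpr hi2) hjl)).mpr c)⟩
      · exact Or.inl ((ih1 h hjl).mpr h1)
      · exact Or.inr ⟨i, hi1, hi2, fun c => hi3 ((ih2 h (lt_trans (Nat.cast_lt.mpr hi2) hjl)).mp c)⟩
  | qex b φ ih =>
      simp only [QSat]
      constructor <;> rintro ⟨U', hU', hs⟩
      · refine ⟨patch l U' V, fun i hi => by simp [patch, hi, hU' i hi, h i hi], ?_⟩
        exact (ih (U := U') (V := patch l U' V) (fun i hi => by simp [patch, hi]) hk).mp hs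
      · refine ⟨patch l U' U, fun i hi => by simp [patch, hi, hU' i hi, h i hi], ?_⟩
        exact (ih (U := U') (V := patch l U' U) (fun i hi => by simp [patch, hi]) hk).mp hs
  | qall b φ ih =>
      simp only [QSat]
      constructor <;> intro hyp W hW
      · exact (ih (U := patch l W U) (V := W) (fun i hi => by simp [patch, hi]) hk).mp
          (hyp _ (fun i hi => by simp [patch, hi, hW i hi, (h i hi).symm]))
      · exact (ih (U := patch l W V) (V := W) (fun i hi => by simp [patch, hi]) hk).mp
          (hyp _ (fun i hi => by simp [patch, hi, hW i hi, h i hi]))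

end Lemmas
section Lemmas2
variable {A : Type} {l : ℕ∞}

lemma unprimed_sat {U : ℕ → Set (A ⊕ A)} {V : ℕ → Set A}
    (h : ∀ i a, Sum.inl a ∈ U i ↔ a ∈ V i) (ψ : Formula A) (k : ℕ) :
    satAux l U U k (unprimed ψ) ↔ satAux l V V k ψ := by
  induction ψ generalizing k with
  | atom a => simp [unprimed, satAux, h]
  | falsum => simp [unprimed, satAux]
  | verum => simp [unprimed, satAux]
  | conj φ ψ ih1 ih2 => simp [unprimed, satAux, ih1, ih2]
  | disj φ ψ ih1 ih2 => simp [unprimed, satAux, ih1, ih2]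
  | impl φ ψ ih1 ih2 => simp [unprimed, satAux, ih1, ih2]
  | prev φ ih => simp [unprimed, satAux, ih]
  | since φ ψ ih1 ih2 => simp [unprimed, satAux, ih1, ih2]
  | trigger φ ψ ih1 ih2 => simp [unprimed, satAux, ih1, ih2]
  | next φ ih => simp [unprimed, satAux, ih]
  | untl φ ψ ih1 ih2 => simp [unprimed, satAux, ih1, ih2]
  | release φ ψ ih1 ih2 => simp [unprimed, satAux, ih1, ih2]
  | whil φ ψ ih1 ih2 => simp [unprimed, satAux, ih1, ih2]

lemma star_sat {U : ℕ → Set (A ⊕ A)} {H T : ℕ → Set A}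
    (hT : ∀ i a, Sum.inl a ∈ U i ↔ a ∈ T i)
    (hH : ∀ i a, Sum.inr a ∈ U i ↔ a ∈ H i)
    (ψ : Formula A) (hW : WFree ψ) (k : ℕ) :
    satAux l U U k (star ψ) ↔ satAux l T H k ψ := by
  induction ψ generalizing k with
  | atom a => simp [_root_.star, satAux, hH]
  | falsum => simp [_root_.star, satAux]
  | verum => simp [_root_.star, satAux]
  | conj φ ψ ih1 ih2 => simp [_root_.star, satAux, ih1 hW.1, ih2 hW.2]
  | disj φ ψ ih1 ih2 => simp [_root_.star, satAux, ih1 hW.1, ih2 hW.2]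
  | impl φ ψ ih1 ih2 =>
      simp only [_root_.star, satAux, ih1 hW.1, ih2 hW.2,
        unprimed_sat hT φ, unprimed_sat hT ψ]
      tauto
  | prev φ ih => simp [_root_.star, satAux, ih hW]
  | since φ ψ ih1 ih2 => simp [_root_.star, satAux, ih1 hW.1, ih2 hW.2]
  | trigger φ ψ ih1 ih2 => simp [_root_.star, satAux, ih1 hW.1, ih2 hW.2]
  | next φ ih => simp [_root_.star, satAux, ih hW]
  | untl φ ψ ih1 ih2 => simp [_root_.star, satAux, ih1 hW.1, ih2 hW.2]
  | release φ ψ ih1 ih2 => simp [_root_.star, satAux, ih1 hW.1, ih2 hW.2]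
  | whil φ ψ ih1 ih2 => exact absurd hW (by simp [WFree])

end Lemmas2
section Lemmas3
variable {A B : Type} {l : ℕ∞}

lemma qsat_bigAnd (U : ℕ → Set B) (L : List (Formula B)) (k : ℕ) :
    QSat l U k (toQ (bigAnd L)) ↔ ∀ ψ ∈ L, QSat l U k (toQ ψ) := by
  unfold bigAnd
  induction L with
  | nil => simp [toQ, QSat]
  | cons a L ih => simp [toQ, QSat, List.mem_cons, ih]

lemma qsat_bigOr (U : ℕ → Set B) (L : List (Formula B)) (k : ℕ) :
    QSat l U k (toQ (bigOr L)) ↔ ∃ ψ ∈ L, QSat l U k (toQ ψ) := by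
  unfold bigOr
  induction L with
  | nil => simp [toQ, QSat]
  | cons a L ih => simp [toQ, QSat, List.mem_cons, ih]

lemma lt_sat [Fintype A] {U : ℕ → Set (A ⊕ A)} {H T : ℕ → Set A}
    (hT : ∀ i a, Sum.inl a ∈ U i ↔ a ∈ T i)
    (hH : ∀ i a, Sum.inr a ∈ U i ↔ a ∈ H i) :
    QSat l U 0 (toQ (ltFormula A)) ↔ TraceLt l H T := by
  have hmem : ∀ a : A, a ∈ (Finset.univ : Finset A).toList := fun a =>
    Finset.mem_toList.mpr (Finset.mem_univ a)
  simp only [ltFormula, toQ, QSat, qsat_bigAnd, qsat_bigOr, List.mem_map]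
  constructor
  · rintro ⟨h1, ψ, ⟨a, -, rfl⟩, h2⟩
    constructor
    · intro i hi a ha
      have := h1 _ ⟨a, hmem a, rfl⟩
      simp only [Formula.always, toQ, QSat] at this
      rcases this i (Nat.zero_le i) hi with h | ⟨j, -, -, hf⟩
      · exact (hT i a).mp (h ((hH i a).mpr ha))
      · exact absurd hf (by simp [toQ, QSat])
    · intro heq
      simp only [Formula.ev, Formula.neg, toQ, QSat] at h2
      obtain ⟨j, -, hjl, ⟨hna, ha⟩, -⟩ := h2
      have : a ∈ T j := (hT j a).mp ha
      rw [← heq j hjl] at this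
      exact hna ((hH j a).mpr this)
  · rintro ⟨hle, hne⟩
    constructor
    · rintro ψ ⟨a, -, rfl⟩
      simp only [Formula.always, toQ, QSat]
      intro j _ hjl
      exact Or.inl fun h => (hT j a).mpr (hle j hjl ((hH j a).mp h))
    · have : ∃ j : ℕ, (j : ℕ∞) < l ∧ H j ≠ T j := by
        by_contra hc
        push_neg at hc
        exact hne fun i hi => hc i hi
      obtain ⟨j, hjl, hne'⟩ := this
      obtain ⟨a, haT, haH⟩ := Set.exists_of_ssubset (lt_of_le_of_ne (hle j hjl) hne')
      refine ⟨_, ⟨a, hmem a, rfl⟩, ?_⟩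
      simp only [Formula.ev, Formula.neg, toQ, QSat]
      exact ⟨j, Nat.zero_le j, hjl,
        ⟨fun h => haH ((hH j a).mp h), (hT j a).mpr haT⟩,
        fun i _ _ => trivial⟩

lemma exList_sat (L : List B) (ψ : QFormula B) (U : ℕ → Set B) {k : ℕ}
    (hk : (k : ℕ∞) < l) :
    QSat l U k (exList L ψ) ↔
      ∃ U' : ℕ → Set B, (∀ i : ℕ, (i : ℕ∞) < l → U' i \ {b | b ∈ L} = U i \ {b | b ∈ L})
        ∧ QSat l U' k ψ := by
  induction L generalizing U with
  | nil =>
      simp only [exList, List.foldr, List.not_mem_nil, Set.setOf_false, Set.diff_empty]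
      constructor
      · exact fun h => ⟨U, fun i _ => rfl, h⟩
      · rintro ⟨U', hU', h⟩
        exact (qsat_congr hU' hk ψ).mp h
  | cons b L ih =>
      simp only [exList, List.foldr, QSat] at ih ⊢
      constructor
      · rintro ⟨U1, hU1, h1⟩
        obtain ⟨U', hU', h'⟩ := (ih U1).mp h1
        refine ⟨U', fun i hi => ?_, h'⟩
        have e1 := hU1 i hi
        have e2 := hU' i hi
        ext x
        simp only [Set.ext_iff, Set.mem_diff, Set.mem_setOf_eq, Set.mem_singleton_iff] at e1 e2 ⊢
        have := e1 x; have := e2 x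
        simp only [List.mem_cons]
        tauto
      · rintro ⟨U', hU', h'⟩
        refine ⟨fun i => (U i \ {b}) ∪ (U' i ∩ {b}), fun i hi => ?_, ?_⟩
        · ext x
          simp only [Set.mem_diff, Set.mem_union, Set.mem_inter_iff, Set.mem_singleton_iff]
          tauto
        · refine (ih _).mpr ⟨U', fun i hi => ?_, h'⟩
          have e := hU' i hi
          ext x
          simp only [Set.ext_iff, Set.mem_diff, Set.mem_setOf_eq, List.mem_cons,
            Set.mem_union, Set.mem_inter_iff, Set.mem_singleton_iff] at e ⊢
          have := e x
          tauto

end Lemmas3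
/-- SM operator correctness: a trace `T` over the finite alphabet `𝒜` satisfies
`SM[φ]` at time `0` in QLTL iff `T` is a temporal stable model of `{φ}`. -/
theorem sm_correct {A : Type} [Fintype A] (φ : Formula A) (hW : WFree φ)
    (l : ℕ∞) (hl : (0 : ℕ∞) < l) (T : ℕ → Set A) :
    QSat l (fun i => Sum.inl '' T i) 0 (SMf φ) ↔ IsTS l T {φ} := by
  classical
  set U0 : ℕ → Set (A ⊕ A) := fun i => Sum.inl '' T i with hU0
  have hT0 : ∀ (i : ℕ) (a : A), Sum.inl a ∈ U0 i ↔ a ∈ T i := by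
    intro i a; simp [hU0]
  set S : Set (A ⊕ A) :=
    {b | b ∈ (Finset.univ : Finset A).toList.map Sum.inr} with hSdef
  have hSinl : ∀ a : A, Sum.inl a ∉ S := by intro a; simp [hSdef]
  have hSinr : ∀ a : A, Sum.inr a ∈ S := by
    intro a; simp [hSdef, List.mem_map]
  -- first conjunct
  have hfirst : QSat l U0 0 (toQ (unprimed φ)) ↔ Sat l T T 0 φ := by
    rw [toQ_sat]; exact unprimed_sat hT0 φ 0
  -- the existential part
  have hEx : QSat l U0 0
      (exList ((Finset.univ : Finset A).toList.map Sum.inr)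
        (.conj (toQ (ltFormula A)) (toQ (star φ)))) ↔
      ∃ H : ℕ → Set A, TraceLt l H T ∧ IsModel l H T {φ} := by
    rw [exList_sat _ _ _ hl]
    constructor
    · rintro ⟨U', hagree, hc⟩
      set Hh : ℕ → Set A := fun i => {a | Sum.inr a ∈ U' i} with hHh
      set U2 : ℕ → Set (A ⊕ A) :=
        fun i => Sum.inl '' T i ∪ Sum.inr '' Hh i with hU2
      have hT2 : ∀ (i : ℕ) (a : A), Sum.inl a ∈ U2 i ↔ a ∈ T i := by
        intro i a; simp [hU2]
      have hH2 : ∀ (i : ℕ) (a : A), Sum.inr a ∈ U2 i ↔ a ∈ Hh i := by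
        intro i a; simp [hU2]
      have heq : ∀ i : ℕ, (i : ℕ∞) < l → U' i = U2 i := by
        intro i hi
        have e := hagree i hi
        rw [Set.ext_iff] at e
        ext x
        cases x with
        | inl a =>
            have hnotin : Sum.inl a ∉
                {b : A ⊕ A | b ∈ List.map Sum.inr Finset.univ.toList} := by simp
            have e' := e (Sum.inl a)
            simp only [Set.mem_diff] at e'
            rw [hT2 i a, ← hT0 i a]
            exact ⟨fun h => (e'.mp ⟨h, hnotin⟩).1, fun h => (e'.mpr ⟨h, hnotin⟩).1⟩
        | inr a =>
            exact ⟨fun h => (hH2 i a).mpr h, fun h => (hH2 i a).mp h⟩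
      have hc2 : QSat l U2 0 (.conj (toQ (ltFormula A)) (toQ (star φ))) :=
        (qsat_congr heq hl _).mp hc
      simp only [QSat] at hc2
      refine ⟨Hh, (lt_sat hT2 hH2).mp hc2.1, hl, fun ψ hψ => ?_⟩
      rw [Set.mem_singleton_iff] at hψ; rw [hψ]
      have := (toQ_sat U2 (_root_.star φ) 0).mp hc2.2
      exact (star_sat hT2 hH2 φ hW 0).mp this
    · rintro ⟨H, hlt, hm⟩
      set U' : ℕ → Set (A ⊕ A) :=
        fun i => Sum.inl '' T i ∪ Sum.inr '' H i with hU'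
      have hT' : ∀ (i : ℕ) (a : A), Sum.inl a ∈ U' i ↔ a ∈ T i := by
        intro i a; simp [hU']
      have hH' : ∀ (i : ℕ) (a : A), Sum.inr a ∈ U' i ↔ a ∈ H i := by
        intro i a; simp [hU']
      refine ⟨U', fun i hi => ?_, ?_⟩
      · ext x
        cases x with
        | inl a =>
            simp only [Set.mem_diff]
            rw [hT' i a, hT0 i a]
        | inr a =>
            simp only [Set.mem_diff]
            have := hSinr a
            tauto
      · have hsat : Sat l H T 0 φ := hm.2 φ rfl
        refine ⟨(lt_sat hT' hH').mpr hlt, ?_⟩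
        rw [toQ_sat]
        exact (star_sat hT' hH' φ hW 0).mpr hsat
  simp only [SMf, QSat]
  rw [hfirst, hEx]
  constructor
  · rintro ⟨h1, h2⟩
    refine ⟨⟨hl, fun ψ hψ => ?_⟩, fun H hlt hm => h2 ⟨H, hlt, hm⟩⟩
    rw [Set.mem_singleton_iff] at hψ; rw [hψ]; exact h1
  · rintro ⟨hmod, hmin⟩
    refine ⟨hmod.2 φ rfl, ?_⟩
    rintro ⟨H, hlt, hm⟩
    exact hmin H hlt hm
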